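/- (Bound (3.10)) Under the assumptions of Lemma th3.1 (Algorithm 1 conditions (i)–(iii) at every iteration, (τ_k), (λ_k) nondecreasing positive, R − τ_kλ_kS⁻¹ positive definite for every k, and (x*, y*) a saddle point of L), for every N ≥ 1 and every k with 0 ≤ k ≤ N: ‖y* − ȳᵏ‖_S ≤ 2A_N + √(τ_N/τ_0)·‖y* − ȳ⁰‖_S + √(τ_N/λ_0)·‖x* − x⁰‖_{AᵀRA} + √(2B_N), where A_N = τ_N·Σ_{k=0}^{N−1} √(ε_{k+1}/τ_k) and B_N = τ_N·Σ_{k=0}^{N−1} (2ε_{k+1} + δ_{k+1}). -/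

import Mathlib

/-!
The quantity `Φₖ = ‖y* - ȳᵏ‖²_S / (2τₖ) + ‖x* - xᵏ‖²_{AᵀRA} / (2λₖ)` decreases along the
iteration up to `εₖ₊₁ + δₖ₊₁ + √(εₖ₊₁/τₖ) ‖y* - ȳᵏ⁺¹‖_S`: add the inexact optimality
conditions (i), (ii), (iii) at the saddle point, use the saddle inequalities to cancel `f` and `g`,
and absorb the remaining cross term by Young's inequality, which is where `R ⪰ τₖλₖ S⁻¹` enters.
Condition (iii) only says that `ȳᵏ⁺¹` is an `εₖ₊₁/2`-minimizer of a `1/τₖ`-strongly convex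
function, and testing it along segments recovers quadratic growth up to a term of order
`√(εₖ₊₁/τₖ) ‖·‖_S`. As the stepsizes increase, summing gives
`‖y* - ȳᵏ‖²_S ≤ 2τ_N Φ₀ + 2τ_N ∑ (ε + δ) + 2τ_N ∑ √(ε/τ) ‖y* - ȳʲ⁺¹‖_S` for `k ≤ N`,
and comparing with the largest `‖y* - ȳᵏ‖_S`, `k ≤ N`, solves this quadratic inequality.
-/

open Matrix Finset Filter

/-- squared M-norm: ⟨x, M x⟩ -/
noncomputable def sqnorm {d : ℕ} (M : Matrix (Fin d) (Fin d) ℝ) (x : Fin d → ℝ) : ℝ :=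
  x ⬝ᵥ M.mulVec x

/-- M-norm: √⟨x, M x⟩ -/
noncomputable def mnorm {d : ℕ} (M : Matrix (Fin d) (Fin d) ℝ) (x : Fin d → ℝ) : ℝ :=
  Real.sqrt (x ⬝ᵥ M.mulVec x)

/-- The Lagrangian L(x,y) = f(x) + ⟨Ax, y⟩ − g(y). -/
noncomputable def Lag {n m : ℕ} (f : (Fin n → ℝ) → ℝ) (g : (Fin m → ℝ) → ℝ)
    (A : Matrix (Fin m) (Fin n) ℝ) (x : Fin n → ℝ) (y : Fin m → ℝ) : ℝ :=
  f x + A.mulVec x ⬝ᵥ y - g y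

/-- (x*, y*) is a saddle point of L. -/
def IsSaddle {n m : ℕ} (f : (Fin n → ℝ) → ℝ) (g : (Fin m → ℝ) → ℝ)
    (A : Matrix (Fin m) (Fin n) ℝ) (xs : Fin n → ℝ) (ys : Fin m → ℝ) : Prop :=
  ∀ (x : Fin n → ℝ) (y : Fin m → ℝ),
    Lag f g A xs y ≤ Lag f g A xs ys ∧ Lag f g A xs ys ≤ Lag f g A x ys

section QuadraticForm

variable {d : ℕ} {M : Matrix (Fin d) (Fin d) ℝ}

lemma sqnorm_nonneg (hM : M.PosSemidef) (x : Fin d → ℝ) : 0 ≤ sqnorm M x :=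
  hM.dotProduct_mulVec_nonneg x

lemma mnorm_sq (hM : M.PosSemidef) (x : Fin d → ℝ) : mnorm M x ^ 2 = sqnorm M x :=
  Real.sq_sqrt (sqnorm_nonneg hM x)

lemma Matrix.PosSemidef.isSymm (hM : M.PosSemidef) : M.IsSymm :=
  isHermitian_iff_isSymm.mp hM.isHermitian

lemma Matrix.IsSymm.dotProduct_mulVec_comm (hM : M.IsSymm) (u v : Fin d → ℝ) :
    u ⬝ᵥ M *ᵥ v = v ⬝ᵥ M *ᵥ u := by
  rw [← dotProduct_transpose_mulVec, hM.eq]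

lemma sqnorm_add (hM : M.IsSymm) (u v : Fin d → ℝ) :
    sqnorm M (u + v) = sqnorm M u + 2 * (u ⬝ᵥ M *ᵥ v) + sqnorm M v := by
  simp only [sqnorm, mulVec_add, dotProduct_add, add_dotProduct, hM.dotProduct_mulVec_comm v u]
  ring

lemma sqnorm_sub (hM : M.IsSymm) (u v : Fin d → ℝ) :
    sqnorm M (u - v) = sqnorm M u - 2 * (u ⬝ᵥ M *ᵥ v) + sqnorm M v := by
  simp only [sqnorm, mulVec_sub, dotProduct_sub, sub_dotProduct, hM.dotProduct_mulVec_comm v u]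
  ring

lemma sqnorm_smul (c : ℝ) (u : Fin d → ℝ) : sqnorm M (c • u) = c ^ 2 * sqnorm M u := by
  simp only [sqnorm, mulVec_smul, dotProduct_smul, smul_dotProduct, smul_eq_mul]
  ring

lemma sqnorm_sub_comm (u v : Fin d → ℝ) : sqnorm M (u - v) = sqnorm M (v - u) := by
  rw [← neg_sub, ← neg_one_smul ℝ (v - u), sqnorm_smul]
  ring

lemma transpose_mul_mul_mulVec_dotProduct {n : ℕ} (A : Matrix (Fin d) (Fin n) ℝ)
    (v z : Fin n → ℝ) : ((Aᵀ * M * A) *ᵥ v) ⬝ᵥ z = (A *ᵥ z) ⬝ᵥ M *ᵥ (A *ᵥ v) := by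
  rw [← mulVec_mulVec, ← mulVec_mulVec, dotProduct_comm, dotProduct_transpose_mulVec,
    dotProduct_comm]

/-- Young's inequality for norms coupled by `R ⪰ τλ S⁻¹`: expand `0 ≤ ‖v - τ S⁻¹ u‖²_S`. -/
lemma dotProduct_le_sqnorm_add_sqnorm {S R : Matrix (Fin d) (Fin d) ℝ} (hS : S.PosDef)
    {τ lam : ℝ} (hτ : 0 < τ) (hlam : 0 < lam) (hRS : (R - (τ * lam) • S⁻¹).PosSemidef)
    (u v : Fin d → ℝ) :
    u ⬝ᵥ v ≤ 1 / (2 * lam) * sqnorm R u + 1 / (2 * τ) * sqnorm S v := by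
  have hSymm : S.IsSymm := hS.posSemidef.isSymm
  set q := u ⬝ᵥ S⁻¹ *ᵥ u
  have hSS : S *ᵥ (S⁻¹ *ᵥ u) = u := by
    rw [mulVec_mulVec, mul_nonsing_inv S (isUnit_iff_ne_zero.mpr hS.det_pos.ne'), one_mulVec]
  have hv : 0 ≤ sqnorm S v - 2 * τ * (u ⬝ᵥ v) + τ ^ 2 * q := by
    have h := sqnorm_nonneg hS.posSemidef (v - τ • S⁻¹ *ᵥ u)
    have hq : sqnorm S (S⁻¹ *ᵥ u) = q := by rw [sqnorm, hSS, dotProduct_comm]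
    rwa [sqnorm_sub hSymm, sqnorm_smul, hq, mulVec_smul, hSS, dotProduct_smul,
      dotProduct_comm v, smul_eq_mul, ← mul_assoc] at h
  have hu : τ * lam * q ≤ sqnorm R u := by
    have h := sqnorm_nonneg hRS u
    rwa [sqnorm, sub_mulVec, dotProduct_sub, smul_mulVec, dotProduct_smul, smul_eq_mul,
      sub_nonneg] at h
  have key : 2 * τ * lam * (u ⬝ᵥ v) ≤ lam * sqnorm S v + τ * sqnorm R u := by nlinarith
  rw [div_mul_eq_mul_div, div_mul_eq_mul_div, div_add_div _ _ (by positivity) (by positivity),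
    le_div_iff₀ (by positivity)]
  nlinarith

end QuadraticForm

lemma sqrt_add_le_add_sqrt {a b : ℝ} (ha : 0 ≤ a) (hb : 0 ≤ b) : √(a + b) ≤ √a + √b := by
  rw [Real.sqrt_le_left (by positivity)]
  nlinarith [Real.sq_sqrt ha, Real.sq_sqrt hb, Real.sqrt_nonneg a, Real.sqrt_nonneg b]

/-- Take `t = 1` if `b ≤ a`, and `t = √(a / b)` otherwise (`t → 0` if `a = 0`). -/
lemma neg_sub_two_mul_sqrt_le_of_forall {a b X : ℝ} (ha : 0 ≤ a) (hb : 0 ≤ b)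
    (h : ∀ t, 0 < t → t ≤ 1 → -a - t ^ 2 * b ≤ t * X) : -a - 2 * √(a * b) ≤ X := by
  rcases le_or_gt b a with hba | hab
  · have hb_le : b ≤ √(a * b) := Real.le_sqrt_of_sq_le (by nlinarith)
    linarith [h 1 one_pos le_rfl, Real.sqrt_nonneg (a * b)]
  have hb : 0 < b := by linarith
  rcases ha.eq_or_lt with rfl | ha
  · suffices 0 ≤ X by simpa
    refine le_of_forall_pos_le_add fun η hη => ?_
    set t := min 1 (η / b)
    have ht : 0 < t := lt_min one_pos (div_pos hη hb)
    have htb : t * b ≤ η := (le_div_iff₀ hb).mp (min_le_right _ _)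
    have := h t ht (min_le_left _ _)
    nlinarith
  · set t := √(a / b)
    have ht : 0 < t := Real.sqrt_pos.mpr (div_pos ha hb)
    have ht1 : t ≤ 1 := Real.sqrt_le_one.mpr ((div_le_one hb).mpr hab.le)
    have ht2 : t ^ 2 * b = a := by rw [Real.sq_sqrt (by positivity), div_mul_cancel₀ _ hb.ne']
    have htab : t * √(a * b) = a := by
      have := hb.ne'
      rw [← Real.sqrt_mul (by positivity), show a / b * (a * b) = a ^ 2 by field_simp,
        Real.sqrt_sq ha.le]
    have := h t ht ht1
    nlinarith

/-- Test the approximate minimality of `z` at the points `z + t • (w - z)`, `t ∈ (0, 1]`. -/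
lemma ConvexOn.add_sqnorm_growth_of_approx_min {d : ℕ} {h : (Fin d → ℝ) → ℝ}
    (hh : ConvexOn ℝ Set.univ h) {S : Matrix (Fin d) (Fin d) ℝ} (hS : S.PosSemidef)
    {τ ε : ℝ} (hτ : 0 < τ) (hε : 0 ≤ ε) {b z : Fin d → ℝ}
    (hz : ∀ y, h z + 1 / (2 * τ) * sqnorm S (z - b) - ε / 2
      ≤ h y + 1 / (2 * τ) * sqnorm S (y - b))
    (w : Fin d → ℝ) :
    h z + 1 / (2 * τ) * sqnorm S (z - b) + 1 / (2 * τ) * sqnorm S (w - z) - ε / 2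
        - √(ε / τ) * mnorm S (w - z) ≤ h w + 1 / (2 * τ) * sqnorm S (w - b) := by
  have hSymm : S.IsSymm := hS.isSymm
  set p := 1 / (2 * τ)
  set q := sqnorm S (w - z)
  set D := (z - b) ⬝ᵥ S *ᵥ (w - z)
  have hp : 0 ≤ p := by positivity
  have hq : 0 ≤ q := sqnorm_nonneg hS _
  have hseg : ∀ t, 0 < t → t ≤ 1 → -(ε / 2) - t ^ 2 * (p * q) ≤ t * (h w - h z + 2 * p * D) := by
    intro t ht0 ht1
    have hconv : h (z + t • (w - z)) ≤ (1 - t) * h z + t * h w := by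
      have := hh.2 (Set.mem_univ z) (Set.mem_univ w) (sub_nonneg.2 ht1) ht0.le (sub_add_cancel 1 t)
      rwa [show (1 - t) • z + t • w = z + t • (w - z) by module] at this
    have hquad : sqnorm S (z + t • (w - z) - b) = sqnorm S (z - b) + 2 * t * D + t ^ 2 * q := by
      rw [add_sub_right_comm, sqnorm_add hSymm, sqnorm_smul, mulVec_smul, dotProduct_smul,
        smul_eq_mul]
      ring
    have := hz (z + t • (w - z))
    rw [hquad] at this
    linarith
  have key := neg_sub_two_mul_sqrt_le_of_forall (by linarith) (mul_nonneg hp hq) hseg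
  have hsqrt : 2 * √(ε / 2 * (p * q)) = √(ε / τ) * mnorm S (w - z) := by
    rw [show ε / 2 * (p * q) = ε / τ * q / 2 ^ 2 by simp only [p]; field_simp,
      Real.sqrt_div' _ (by positivity), Real.sqrt_sq zero_le_two,
      Real.sqrt_mul (by positivity), mul_div_cancel₀ _ two_ne_zero]
    rfl
  have hwb : sqnorm S (w - b) = sqnorm S (z - b) + 2 * D + q := by
    rw [← sqnorm_add hSymm, sub_add_sub_cancel']
  rw [hwb]
  linarith

lemma le_add_sum_range_of_succ_le {u c : ℕ → ℝ} (h : ∀ j, u (j + 1) ≤ u j + c j) (k : ℕ) :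
    u k ≤ u 0 + ∑ j ∈ range k, c j := by
  have := sum_le_sum fun j (_ : j ∈ range k) => sub_le_iff_le_add'.mpr (h j)
  rw [sum_range_sub] at this
  linarith

lemma le_add_sqrt_of_sq_le_add_mul {x s C : ℝ} (hs : 0 ≤ s) (h : x ^ 2 ≤ C + s * x) :
    x ≤ s + √C := by
  by_contra! hx
  have hC : C ≤ √C * x := by
    rcases le_total C 0 with hC | hC
    · nlinarith [Real.sqrt_nonneg C]
    · nlinarith [Real.mul_self_sqrt hC, Real.sqrt_nonneg C]
  nlinarith [Real.sqrt_nonneg C]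

/-- A discrete Bihari–Gronwall inequality: compare with the maximum of `u` on `[0, N]`. -/
lemma le_sum_add_sqrt_of_sq_le {u a : ℕ → ℝ} {C : ℝ} {N : ℕ} (hu : ∀ j, 0 ≤ u j)
    (ha : ∀ j, 0 ≤ a j) (h : ∀ k ≤ N, u k ^ 2 ≤ C + ∑ j ∈ range k, a j * u (j + 1))
    {k : ℕ} (hk : k ≤ N) : u k ≤ ∑ j ∈ range N, a j + √C := by
  obtain ⟨k₀, hk₀, hmax⟩ := exists_max_image (range (N + 1)) u ⟨0, by simp⟩
  have hk₀N : k₀ ≤ N := Nat.lt_succ_iff.mp (mem_range.mp hk₀)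
  have hsum : ∑ j ∈ range k₀, a j * u (j + 1) ≤ (∑ j ∈ range N, a j) * u k₀ := by
    rw [sum_mul]
    calc ∑ j ∈ range k₀, a j * u (j + 1) ≤ ∑ j ∈ range k₀, a j * u k₀ :=
          sum_le_sum fun j hj => mul_le_mul_of_nonneg_left
            (hmax _ (by simp only [mem_range] at hj ⊢; omega)) (ha j)
      _ ≤ ∑ j ∈ range N, a j * u k₀ :=
          sum_le_sum_of_subset_of_nonneg (range_subset_range.mpr hk₀N)
            fun j _ _ => mul_nonneg (ha j) (hu k₀)
  calc u k ≤ u k₀ := hmax k (mem_range.mpr (Nat.lt_succ_of_le hk))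
    _ ≤ ∑ j ∈ range N, a j + √C :=
        le_add_sqrt_of_sq_le_add_mul (sum_nonneg fun j _ => ha j) ((h k₀ hk₀N).trans (by linarith))

lemma le_mul_sum_add_sqrt_of_energy_le {E u c e r : ℕ → ℝ} {N k : ℕ}
    (hdesc : ∀ j, E (j + 1) ≤ E j + (e j + r j * u (j + 1)))
    (huE : ∀ j, u j ^ 2 ≤ c j * E j) (hE : ∀ j, 0 ≤ E j) (hu : ∀ j, 0 ≤ u j)
    (hc : Monotone c) (hcN : 0 ≤ c N) (he : ∀ j, 0 ≤ e j) (hr : ∀ j, 0 ≤ r j) (hk : k ≤ N) :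
    u k ≤ c N * ∑ j ∈ range N, r j + √(c N * (E 0 + ∑ j ∈ range N, e j)) := by
  have hsq : ∀ k ≤ N,
      u k ^ 2 ≤ c N * (E 0 + ∑ j ∈ range N, e j) + ∑ j ∈ range k, c N * r j * u (j + 1) := by
    intro k hk
    have htel := le_add_sum_range_of_succ_le hdesc k
    rw [sum_add_distrib] at htel
    have hext : ∑ j ∈ range k, e j ≤ ∑ j ∈ range N, e j :=
      sum_le_sum_of_subset_of_nonneg (range_subset_range.mpr hk) fun j _ _ => he j
    calc u k ^ 2 ≤ c k * E k := huE k
      _ ≤ c N * E k := mul_le_mul_of_nonneg_right (hc hk) (hE k)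
      _ ≤ c N * (E 0 + ∑ j ∈ range N, e j + ∑ j ∈ range k, r j * u (j + 1)) :=
          mul_le_mul_of_nonneg_left (by linarith) hcN
      _ = _ := by simp only [mul_add, mul_sum, mul_assoc]
  rw [mul_sum]
  exact le_sum_add_sqrt_of_sq_le hu (fun j => mul_nonneg hcN (hr j)) hsq hk

section SaddleEnergy

variable {n m : ℕ} (S R : Matrix (Fin m) (Fin m) ℝ) (A : Matrix (Fin m) (Fin n) ℝ)
  (xs : Fin n → ℝ) (ys : Fin m → ℝ)

/-- The Lyapunov function: `Φₖ = saddleEnergy S R A x* y* τₖ λₖ xᵏ ȳᵏ`. -/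
noncomputable def saddleEnergy (τ lam : ℝ) (x : Fin n → ℝ) (y : Fin m → ℝ) : ℝ :=
  1 / (2 * τ) * sqnorm S (ys - y) + 1 / (2 * lam) * sqnorm R (A *ᵥ (xs - x))

variable {S R A xs ys}

lemma saddleEnergy_nonneg (hS : S.PosSemidef) (hR : R.PosSemidef) {τ lam : ℝ} (hτ : 0 ≤ τ)
    (hlam : 0 ≤ lam) (x : Fin n → ℝ) (y : Fin m → ℝ) : 0 ≤ saddleEnergy S R A xs ys τ lam x y :=
  add_nonneg (mul_nonneg (by positivity) (sqnorm_nonneg hS _))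
    (mul_nonneg (by positivity) (sqnorm_nonneg hR _))

lemma saddleEnergy_anti (hS : S.PosSemidef) (hR : R.PosSemidef) {τ τ' lam lam' : ℝ}
    (hτ : 0 < τ) (hlam : 0 < lam) (hττ' : τ ≤ τ') (hlamlam' : lam ≤ lam')
    (x : Fin n → ℝ) (y : Fin m → ℝ) :
    saddleEnergy S R A xs ys τ' lam' x y ≤ saddleEnergy S R A xs ys τ lam x y := by
  unfold saddleEnergy
  gcongr
  · exact sqnorm_nonneg hS _
  · exact sqnorm_nonneg hR _

lemma sqnorm_le_two_mul_saddleEnergy (hR : R.PosSemidef) {τ lam : ℝ} (hτ : 0 < τ)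
    (hlam : 0 < lam) (x : Fin n → ℝ) (y : Fin m → ℝ) :
    sqnorm S (ys - y) ≤ 2 * τ * saddleEnergy S R A xs ys τ lam x y := by
  unfold saddleEnergy
  rw [mul_add, ← mul_assoc, mul_one_div_cancel (by positivity), one_mul]
  exact le_add_of_nonneg_right
    (mul_nonneg (by positivity) (mul_nonneg (by positivity) (sqnorm_nonneg hR _)))

/-- Add condition (i) at `yb'`, (ii) at `xs`, the growth form of (iii) at `ys` and the two saddle
inequalities; then `f` and `g` cancel, and the cross term `⟪A (x - x'), y' - yb'⟫` left over is
absorbed by Young's inequality. -/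
lemma saddleEnergy_step_le {f : (Fin n → ℝ) → ℝ} {g : (Fin m → ℝ) → ℝ}
    (hg : ConvexOn ℝ Set.univ g) (hS : S.PosDef) (hR : R.IsSymm) {τ lam ε δ : ℝ}
    (hτ : 0 < τ) (hlam : 0 < lam) (hRS : (R - (τ * lam) • S⁻¹).PosSemidef) (hε : 0 ≤ ε)
    {x x' : Fin n → ℝ} {y' yb yb' : Fin m → ℝ}
    (hi : ∀ y, g y ≥ g y' + ((1 / τ) • (S *ᵥ (yb - y')) + A *ᵥ x) ⬝ᵥ (y - y') - ε / 2)
    (hii : ∀ z, f z + A *ᵥ z ⬝ᵥ y'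
      ≥ f x' + A *ᵥ x' ⬝ᵥ y' + ((1 / lam) • ((Aᵀ * R * A) *ᵥ (x - x'))) ⬝ᵥ (z - x') - δ)
    (hiii : ∀ y, g y - A *ᵥ x' ⬝ᵥ y + 1 / (2 * τ) * sqnorm S (y - yb)
      ≥ g yb' - A *ᵥ x' ⬝ᵥ yb' + 1 / (2 * τ) * sqnorm S (yb' - yb) - ε / 2)
    (hsaddle : IsSaddle f g A xs ys) :
    saddleEnergy S R A xs ys τ lam x' yb'
      ≤ saddleEnergy S R A xs ys τ lam x yb + (ε + δ) + √(ε / τ) * mnorm S (ys - yb') := by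
  have hSymm : S.IsSymm := hS.posSemidef.isSymm
  have hprimal := hii xs
  rw [smul_dotProduct, transpose_mul_mul_mulVec_dotProduct, smul_eq_mul] at hprimal
  have hdual := hi yb'
  rw [add_dotProduct, smul_dotProduct, smul_eq_mul, dotProduct_comm (S *ᵥ _),
    dotProduct_sub] at hdual
  have hgrowth := (hg.sub ((dotProductBilin ℝ ℝ (A *ᵥ x')).concaveOn convex_univ)
    ).add_sqnorm_growth_of_approx_min hS.posSemidef hτ hε hiii ys
  simp only [Pi.sub_apply, dotProductBilin_apply_apply] at hgrowth
  have hyoung := dotProduct_le_sqnorm_add_sqnorm hS hτ hlam hRS (A *ᵥ (x - x')) (y' - yb')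
  rw [sqnorm_sub_comm y' yb'] at hyoung
  have hpair : A *ᵥ (x - x') ⬝ᵥ (y' - yb')
      = A *ᵥ x ⬝ᵥ y' - A *ᵥ x ⬝ᵥ yb' - A *ᵥ x' ⬝ᵥ y' + A *ᵥ x' ⬝ᵥ yb' := by
    simp only [mulVec_sub, sub_dotProduct, dotProduct_sub]
    ring
  have hRpol : sqnorm R (A *ᵥ (xs - x)) = sqnorm R (A *ᵥ (xs - x'))
      - 2 * (A *ᵥ (xs - x') ⬝ᵥ R *ᵥ (A *ᵥ (x - x'))) + sqnorm R (A *ᵥ (x - x')) := by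
    rw [← sqnorm_sub hR, ← mulVec_sub, sub_sub_sub_cancel_right]
  have hSpol : sqnorm S (yb' - yb) = sqnorm S (yb' - y')
      - 2 * ((yb' - y') ⬝ᵥ S *ᵥ (yb - y')) + sqnorm S (yb - y') := by
    rw [← sqnorm_sub hSymm, sub_sub_sub_cancel_right]
  have hxgap := (hsaddle x' ys).2
  have hygap := (hsaddle xs y').1
  unfold Lag at hxgap hygap
  have hnonneg : 0 ≤ 1 / (2 * τ) * sqnorm S (yb - y') :=
    mul_nonneg (by positivity) (sqnorm_nonneg hS.posSemidef _)
  unfold saddleEnergy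
  linear_combination hprimal + hdual + hgrowth + hyoung + hxgap + hygap + hnonneg
    - 1 / (2 * lam) * hRpol - 1 / (2 * τ) * hSpol - hpair

lemma sqrt_two_mul_saddleEnergy_add_le (hS : S.PosSemidef) (hR : R.PosSemidef)
    {τ lam σ e : ℝ} (hτ : 0 < τ) (hlam : 0 < lam) (hσ : 0 ≤ σ) (he : 0 ≤ e)
    (x : Fin n → ℝ) (y : Fin m → ℝ) :
    √(2 * σ * (saddleEnergy S R A xs ys τ lam x y + e))
      ≤ √(σ / τ) * mnorm S (ys - y) + √(σ / lam) * mnorm R (A *ᵥ (xs - x)) + √(2 * σ * e) := by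
  have hdist₁ : 0 ≤ σ / τ * sqnorm S (ys - y) := mul_nonneg (by positivity) (sqnorm_nonneg hS _)
  have hdist₂ : 0 ≤ σ / lam * sqnorm R (A *ᵥ (xs - x)) :=
    mul_nonneg (by positivity) (sqnorm_nonneg hR _)
  have hsplit : 2 * σ * (saddleEnergy S R A xs ys τ lam x y + e)
      = σ / τ * sqnorm S (ys - y) + σ / lam * sqnorm R (A *ᵥ (xs - x)) + 2 * σ * e := by
    unfold saddleEnergy
    field_simp
  rw [hsplit, mnorm, mnorm, ← Real.sqrt_mul (by positivity), ← Real.sqrt_mul (by positivity)]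
  exact (sqrt_add_le_add_sqrt (add_nonneg hdist₁ hdist₂) (by positivity)).trans
    (add_le_add_left (sqrt_add_le_add_sqrt hdist₁ hdist₂) _)

end SaddleEnergy

theorem dual_iterate_bound_general {n m : ℕ}
    (f : (Fin n → ℝ) → ℝ) (g : (Fin m → ℝ) → ℝ)
    (hg : ConvexOn ℝ Set.univ g)
    (A : Matrix (Fin m) (Fin n) ℝ)
    (S R : Matrix (Fin m) (Fin m) ℝ) (hS : S.PosDef) (hR : R.PosDef)
    (τ lam : ℕ → ℝ) (hτpos : ∀ k, 0 < τ k) (hlampos : ∀ k, 0 < lam k)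
    (hτmono : Monotone τ) (hlammono : Monotone lam)
    (hPD : ∀ k, (R - (τ k * lam k) • S⁻¹).PosDef)
    (ε δ : ℕ → ℝ) (hεnn : ∀ k, 0 ≤ ε k) (hδnn : ∀ k, 0 ≤ δ k)
    (xseq : ℕ → Fin n → ℝ) (yseq ybar : ℕ → Fin m → ℝ)
    (hi : ∀ k, ∀ y, g y ≥ g (yseq (k+1)) +
        ((1 / τ k) • S.mulVec (ybar k - yseq (k+1)) + A.mulVec (xseq k)) ⬝ᵥ
          (y - yseq (k+1)) - ε (k+1) / 2)
    (hii : ∀ k, ∀ x, f x + A.mulVec x ⬝ᵥ yseq (k+1)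
        ≥ f (xseq (k+1)) + A.mulVec (xseq (k+1)) ⬝ᵥ yseq (k+1)
          + ((1 / lam k) • (Aᵀ * R * A).mulVec (xseq k - xseq (k+1))) ⬝ᵥ
              (x - xseq (k+1)) - δ (k+1))
    (hiii : ∀ k, ∀ y, g y - A.mulVec (xseq (k+1)) ⬝ᵥ y
          + (1 / (2 * τ k)) * sqnorm S (y - ybar k)
        ≥ g (ybar (k+1)) - A.mulVec (xseq (k+1)) ⬝ᵥ ybar (k+1)
          + (1 / (2 * τ k)) * sqnorm S (ybar (k+1) - ybar k) - ε (k+1) / 2)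
    (xstar : Fin n → ℝ) (ystar : Fin m → ℝ)
    (hsaddle : IsSaddle f g A xstar ystar) :
    ∀ N : ℕ, 1 ≤ N → ∀ k ≤ N,
      mnorm S (ystar - ybar k)
        ≤ 2 * (τ N * ∑ j ∈ Finset.range N, Real.sqrt (ε (j+1) / τ j))
          + Real.sqrt (τ N / τ 0) * mnorm S (ystar - ybar 0)
          + Real.sqrt (τ N / lam 0) * mnorm R (A.mulVec (xstar - xseq 0))
          + Real.sqrt (2 * (τ N * ∑ j ∈ Finset.range N, (2 * ε (j+1) + δ (j+1)))) := by
  intro N _ k hk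
  have hdescent : ∀ j, saddleEnergy S R A xstar ystar (τ (j + 1)) (lam (j + 1)) (xseq (j + 1))
      (ybar (j + 1)) ≤ saddleEnergy S R A xstar ystar (τ j) (lam j) (xseq j) (ybar j)
        + ((ε (j + 1) + δ (j + 1)) + √(ε (j + 1) / τ j) * mnorm S (ystar - ybar (j + 1))) :=
    fun j => (saddleEnergy_anti hS.posSemidef hR.posSemidef (hτpos j) (hlampos j)
      (hτmono j.le_succ) (hlammono j.le_succ) _ _).trans <|
      (saddleEnergy_step_le hg hS hR.posSemidef.isSymm (hτpos j)
        (hlampos j) (hPD j).posSemidef (hεnn _) (hi j) (hii j) (hiii j) hsaddle).trans_eq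
        (add_assoc _ _ _)
  have hbound := le_mul_sum_add_sqrt_of_energy_le (c := fun j => 2 * τ j) hdescent
    (fun j => (mnorm_sq hS.posSemidef _).trans_le
      (sqnorm_le_two_mul_saddleEnergy hR.posSemidef (hτpos j) (hlampos j) _ _))
    (fun j => saddleEnergy_nonneg hS.posSemidef hR.posSemidef (hτpos j).le (hlampos j).le _ _)
    (fun j => Real.sqrt_nonneg _) (fun i j hij => mul_le_mul_of_nonneg_left (hτmono hij) zero_le_two)
    (mul_nonneg zero_le_two (hτpos N).le) (fun j => add_nonneg (hεnn _) (hδnn _))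
    (fun j => Real.sqrt_nonneg _) hk
  have herrors : 2 * τ N * ∑ j ∈ range N, (ε (j + 1) + δ (j + 1))
      ≤ 2 * (τ N * ∑ j ∈ range N, (2 * ε (j + 1) + δ (j + 1))) := by
    have := hτpos N
    rw [← mul_assoc]
    gcongr with j
    linarith [hεnn (j + 1)]
  have hsqrt := sqrt_two_mul_saddleEnergy_add_le (xs := xstar) (ys := ystar) (A := A) hS.posSemidef
    hR.posSemidef (hτpos 0) (hlampos 0) (hτpos N).le
    (sum_nonneg fun j (_ : j ∈ range N) => add_nonneg (hεnn (j + 1)) (hδnn (j + 1))) (xseq 0) (ybar 0)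
  rw [mul_assoc] at hbound
  linarith [Real.sqrt_le_sqrt herrors]

/-- Bound (3.10). -/
theorem dual_iterate_bound {n m : ℕ}
    (f : (Fin n → ℝ) → ℝ) (g : (Fin m → ℝ) → ℝ)
    (hf : ConvexOn ℝ Set.univ f) (hg : ConvexOn ℝ Set.univ g)
    (A : Matrix (Fin m) (Fin n) ℝ)
    (S R : Matrix (Fin m) (Fin m) ℝ) (hS : S.PosDef) (hR : R.PosDef)
    (τ lam : ℕ → ℝ) (hτpos : ∀ k, 0 < τ k) (hlampos : ∀ k, 0 < lam k)
    (hτmono : Monotone τ) (hlammono : Monotone lam)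
    (hPD : ∀ k, (R - (τ k * lam k) • S⁻¹).PosDef)
    (ε δ : ℕ → ℝ) (hεnn : ∀ k, 0 ≤ ε k) (hδnn : ∀ k, 0 ≤ δ k)
    (xseq : ℕ → Fin n → ℝ) (yseq ybar : ℕ → Fin m → ℝ)
    (hi : ∀ k, ∀ y, g y ≥ g (yseq (k+1)) +
        ((1 / τ k) • S.mulVec (ybar k - yseq (k+1)) + A.mulVec (xseq k)) ⬝ᵥ
          (y - yseq (k+1)) - ε (k+1) / 2)
    (hii : ∀ k, ∀ x, f x + A.mulVec x ⬝ᵥ yseq (k+1)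
        ≥ f (xseq (k+1)) + A.mulVec (xseq (k+1)) ⬝ᵥ yseq (k+1)
          + ((1 / lam k) • (Aᵀ * R * A).mulVec (xseq k - xseq (k+1))) ⬝ᵥ
              (x - xseq (k+1)) - δ (k+1))
    (hiii : ∀ k, ∀ y, g y - A.mulVec (xseq (k+1)) ⬝ᵥ y
          + (1 / (2 * τ k)) * sqnorm S (y - ybar k)
        ≥ g (ybar (k+1)) - A.mulVec (xseq (k+1)) ⬝ᵥ ybar (k+1)
          + (1 / (2 * τ k)) * sqnorm S (ybar (k+1) - ybar k) - ε (k+1) / 2)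
    (xstar : Fin n → ℝ) (ystar : Fin m → ℝ)
    (hsaddle : IsSaddle f g A xstar ystar) :
    ∀ N : ℕ, 1 ≤ N → ∀ k ≤ N,
      mnorm S (ystar - ybar k)
        ≤ 2 * (τ N * ∑ j ∈ Finset.range N, Real.sqrt (ε (j+1) / τ j))
          + Real.sqrt (τ N / τ 0) * mnorm S (ystar - ybar 0)
          + Real.sqrt (τ N / lam 0) * mnorm R (A.mulVec (xstar - xseq 0))
          + Real.sqrt (2 * (τ N * ∑ j ∈ Finset.range N, (2 * ε (j+1) + δ (j+1)))) :=
  dual_iterate_bound_general f g hg A S R hS hR τ lam hτpos hlampos hτmono hlammono hPD ε δ hεnn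
    hδnn xseq yseq ybar hi hii hiii xstar ystar hsaddle
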